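/- Let m = 2p and define two m×m {−1,+1}-matrices: the twill matrix T with t_{x,y} = +1 iff (y − x) mod m ∈ {0,…,p−1}, and the basket matrix B with b_{x,y} = +1 iff ⌊x/p⌋ + ⌊y/p⌋ is even. Then both T and B are crossing matrices of crossing sequence (+p,−p) (every row and column cyclically consists of p consecutive +1's followed by p consecutive −1's), yet rank(T) = p and rank(B) = 1 over ℚ; hence for p ≥ 2 they are not equal up to any rank-preserving equivalence. -/

import Mathlib

/-!
Columns `j` and `j + p` of the twill matrix `T` are negatives of each other, so `T` factors
through its first `p` columns and has rank at most `p`. Conversely, half the difference of rows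
`x` and `x + 1` (for `x < p`) is `e_x - e_{x+p}`, and these `p` combinations restrict to the
identity on the first `p` columns, so the rank is exactly `p`. The basket matrix is the outer
product `c cᵀ` of the block sign vector `c = (1, …, 1, -1, …, -1)`, hence has rank one; `c` and
`-c` (the shift of `c` by `p`) are crossing vectors, and so are all rows and columns of `B`.
-/

/-- A vector indexed by `Fin m` which is cyclically `p` consecutive `+1`'s followed by
`q` consecutive `−1`'s (values in `ℚ`). -/
def IsCycVecQ (p q : ℕ) (v : Fin (p + q) → ℚ) : Prop :=
  ∃ s : ℕ, ∀ k : Fin (p + q), v k = if ((k : ℕ) + s) % (p + q) < p then 1 else -1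

theorem Nat.mod_cases_of_lt_three_mul {a m : ℕ} (h : a < 3 * m) :
    a % m = a ∧ a < m ∨ a % m + m = a ∧ a < 2 * m ∨ a % m + 2 * m = a := by
  have hdiv : a / m < 3 := Nat.div_lt_of_lt_mul (by linarith)
  have hmod : a % m < m := Nat.mod_lt a (by omega)
  have := Nat.mod_add_div a m
  interval_cases a / m <;> omega

theorem Nat.add_mod_add_self_lt_iff {p : ℕ} (hp : 0 < p) (n : ℕ) :
    (n + p) % (p + p) < p ↔ ¬ n % (p + p) < p := by
  rw [Nat.add_mod, Nat.mod_eq_of_lt (show p < p + p by omega)]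
  have := Nat.mod_lt n (show 0 < p + p by omega)
  have := Nat.mod_cases_of_lt_three_mul (a := n % (p + p) + p) (m := p + p) (by omega)
  omega

theorem Matrix.one_le_rank_of_isUnit_apply {m n R : Type*} [Fintype n] [CommRing R]
    [StrongRankCondition R] (A : Matrix m n R) {i : m} {j : n} (h : IsUnit (A i j)) :
    1 ≤ A.rank := by
  have hsub : A.submatrix (fun _ : Unit => i) (fun _ : Unit => j) = Matrix.scalar Unit (A i j) := by
    ext; simp
  calc 1 = (A.submatrix (fun _ : Unit => i) (fun _ : Unit => j)).rank := by
        rw [Matrix.rank_of_isUnit _ (hsub ▸ h.map _), Fintype.card_unit]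
    _ ≤ A.rank := Matrix.rank_submatrix_le _ _ _

theorem Nat.div_eq_ite_of_lt_add_self {x p : ℕ} (h : x < p + p) :
    x / p = if x < p then 0 else 1 := by
  split_ifs with hx
  · exact Nat.div_eq_of_lt hx
  · exact Nat.div_eq_of_lt_le (by omega) (by omega)

namespace IsCycVecQ

variable {p : ℕ} {v : Fin (p + p) → ℚ}

theorem neg (hv : IsCycVecQ p p v) : IsCycVecQ p p (-v) := by
  obtain ⟨s, hs⟩ := hv
  refine ⟨s + p, fun k => ?_⟩
  have hp : 0 < p := by have := k.isLt; omega
  simp only [Pi.neg_apply, hs, ← add_assoc, Nat.add_mod_add_self_lt_iff hp]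
  split_ifs <;> norm_num

theorem sign_smul (hv : IsCycVecQ p p v) {c : ℚ} (hc : c = 1 ∨ c = -1) :
    IsCycVecQ p p (c • v) := by
  rcases hc with rfl | rfl
  · simpa using hv
  · simpa using hv.neg

end IsCycVecQ

def blockSign (p : ℕ) (k : Fin (p + p)) : ℚ := if (k : ℕ) < p then 1 else -1

theorem blockSign_eq_one_or_neg_one (p : ℕ) (k : Fin (p + p)) :
    blockSign p k = 1 ∨ blockSign p k = -1 := by
  unfold blockSign; split_ifs <;> simp

theorem isCycVecQ_blockSign (p : ℕ) : IsCycVecQ p p (blockSign p) :=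
  ⟨0, fun k => by rw [add_zero, Nat.mod_eq_of_lt k.isLt]; rfl⟩

def twill (p : ℕ) : Matrix (Fin (p + p)) (Fin (p + p)) ℚ :=
  Matrix.of fun x y => if ((y : ℕ) + (p + p) - x) % (p + p) < p then 1 else -1

def basket (p : ℕ) : Matrix (Fin (p + p)) (Fin (p + p)) ℚ :=
  Matrix.of fun x y => if ((x : ℕ) / p + (y : ℕ) / p) % 2 = 0 then 1 else -1

section Twill

variable {p : ℕ}

theorem isCycVecQ_twill_row (x : Fin (p + p)) : IsCycVecQ p p (twill p x) := by
  refine ⟨p + p - x, fun k => ?_⟩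
  rw [twill, Matrix.of_apply, Nat.add_sub_assoc x.isLt.le]

theorem isCycVecQ_twill_col (y : Fin (p + p)) : IsCycVecQ p p (fun x => twill p x y) := by
  -- the residues of `y - k` and `k + 3p - 1 - y` modulo `2p` add up to `p - 1` or `3p - 1`
  refine ⟨3 * p - 1 - y, fun k => ?_⟩
  have := k.isLt
  have := y.isLt
  have := Nat.mod_cases_of_lt_three_mul (a := y + (p + p) - k) (m := p + p) (by omega)
  have := Nat.mod_cases_of_lt_three_mul (a := k + (3 * p - 1 - y)) (m := p + p) (by omega)
  exact if_congr (by omega) rfl rfl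

theorem twill_apply_natAdd (x : Fin (p + p)) (j : Fin p) :
    twill p x (Fin.natAdd p j) = -twill p x (Fin.castAdd p j) := by
  have := x.isLt
  have := j.isLt
  have := Nat.mod_cases_of_lt_three_mul (a := p + j + (p + p) - x) (m := p + p) (by omega)
  have := Nat.mod_cases_of_lt_three_mul (a := j + (p + p) - x) (m := p + p) (by omega)
  simp only [twill, Matrix.of_apply, Fin.val_natAdd, Fin.val_castAdd]
  split_ifs <;> first | (exfalso; omega) | norm_num

theorem twill_apply_castAdd_of_le (x : Fin (p + p)) (j : Fin p) (hx : (x : ℕ) ≤ p) :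
    twill p x (Fin.castAdd p j) = if (x : ℕ) ≤ j then 1 else -1 := by
  have := j.isLt
  have := Nat.mod_cases_of_lt_three_mul (a := j + (p + p) - x) (m := p + p) (by omega)
  exact if_congr (by simp only [Fin.val_castAdd]; omega) rfl rfl

theorem rank_twill_le : (twill p).rank ≤ p := by
  set U := (twill p).submatrix id (Fin.castAdd p)
  have hfactor : (twill p).submatrix id finSumFinEquiv =
      U * Matrix.fromCols (1 : Matrix (Fin p) (Fin p) ℚ) (-1) := by
    rw [Matrix.mul_fromCols, Matrix.mul_one, Matrix.mul_neg, Matrix.mul_one]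
    ext x (j | j)
    · rfl
    · simp only [Matrix.submatrix_apply, id, finSumFinEquiv_apply_right, twill_apply_natAdd,
        Matrix.fromCols_apply_inr, Matrix.neg_apply, U]
  calc (twill p).rank = ((twill p).submatrix (Equiv.refl _) finSumFinEquiv).rank :=
        (Matrix.rank_submatrix _ _ _).symm
    _ ≤ U.rank := hfactor ▸ Matrix.rank_mul_le_left _ _
    _ ≤ p := (Matrix.rank_le_card_width U).trans (Fintype.card_fin p).le

theorem le_rank_twill : p ≤ (twill p).rank := by
  let D : Matrix (Fin p) (Fin (p + p)) ℚ := fun i =>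
    (1 / 2 : ℚ) • (Pi.single (Fin.castAdd p i) 1 - Pi.single ⟨i + 1, by omega⟩ 1)
  have hD : (D * twill p).submatrix id (Fin.castAdd p) = 1 := by
    ext i j
    rw [Matrix.submatrix_apply, Matrix.mul_apply', id, smul_dotProduct, sub_dotProduct,
      single_one_dotProduct, single_one_dotProduct,
      twill_apply_castAdd_of_le _ _ i.isLt.le, twill_apply_castAdd_of_le _ _ i.isLt,
      Matrix.one_apply]
    simp only [Fin.val_castAdd, Fin.ext_iff]
    split_ifs <;> first | (exfalso; omega) | norm_num
  calc p = ((D * twill p).submatrix id (Fin.castAdd p)).rank := by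
        rw [hD, Matrix.rank_one, Fintype.card_fin]
    _ ≤ (D * twill p).rank := Matrix.rank_submatrix_le _ _ _
    _ ≤ (twill p).rank := Matrix.rank_mul_le_right _ _

theorem rank_twill : (twill p).rank = p := le_antisymm rank_twill_le le_rank_twill

end Twill

section Basket

variable {p : ℕ}

theorem basket_eq_vecMulVec : basket p = Matrix.vecMulVec (blockSign p) (blockSign p) := by
  ext x y
  simp only [basket, Matrix.of_apply, Matrix.vecMulVec_apply, blockSign,
    Nat.div_eq_ite_of_lt_add_self x.isLt, Nat.div_eq_ite_of_lt_add_self y.isLt]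
  split_ifs <;> first | (exfalso; omega) | norm_num

theorem isCycVecQ_basket_row (x : Fin (p + p)) : IsCycVecQ p p (basket p x) := by
  rw [basket_eq_vecMulVec]
  exact (isCycVecQ_blockSign p).sign_smul (blockSign_eq_one_or_neg_one p x)

theorem isCycVecQ_basket_col (y : Fin (p + p)) : IsCycVecQ p p (fun x => basket p x y) := by
  simp only [basket_eq_vecMulVec, Matrix.vecMulVec_apply, mul_comm _ (blockSign p y)]
  exact (isCycVecQ_blockSign p).sign_smul (blockSign_eq_one_or_neg_one p y)

theorem rank_basket (hp : 0 < p) : (basket p).rank = 1 := by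
  refine le_antisymm ?_ ((basket p).one_le_rank_of_isUnit_apply (i := ⟨0, by omega⟩)
    (j := ⟨0, by omega⟩) ?_)
  · rw [basket_eq_vecMulVec]
    exact Matrix.rank_vecMulVec_le _ _
  · simp [basket]

end Basket

/-- for `m = 2p`, the twill matrix `T` (`t_{x,y} = +1` iff
`(y−x) mod m < p`) and the basket matrix `B` (`b_{x,y} = +1` iff `⌊x/p⌋+⌊y/p⌋` even)
are both crossing matrices of crossing sequence `(+p,−p)`, yet `rank T = p` and
`rank B = 1` over `ℚ`; hence for `p ≥ 2` their ranks differ and they are not related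
by any rank-preserving equivalence. -/
theorem stmt_14 (p : ℕ) (hp : 0 < p)
    (T B : Matrix (Fin (p + p)) (Fin (p + p)) ℚ)
    (hT : ∀ x y, T x y = if ((y : ℕ) + (p + p) - (x : ℕ)) % (p + p) < p then 1 else -1)
    (hB : ∀ x y, B x y = if ((x : ℕ) / p + (y : ℕ) / p) % 2 = 0 then 1 else -1) :
    ((∀ x, IsCycVecQ p p (T x)) ∧ (∀ y, IsCycVecQ p p (fun x => T x y))) ∧
    ((∀ x, IsCycVecQ p p (B x)) ∧ (∀ y, IsCycVecQ p p (fun x => B x y))) ∧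
    T.rank = p ∧ B.rank = 1 ∧ (2 ≤ p → T.rank ≠ B.rank) := by
  obtain rfl : T = twill p := Matrix.ext hT
  obtain rfl : B = basket p := Matrix.ext hB
  refine ⟨⟨isCycVecQ_twill_row, isCycVecQ_twill_col⟩, ⟨isCycVecQ_basket_row,
    isCycVecQ_basket_col⟩, rank_twill, rank_basket hp, fun h2 => ?_⟩
  rw [rank_twill, rank_basket hp]
  omega
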